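/- arXiv:2507.12304 — 4 statements merged into one kernel-verified Lean document; each statement's English description precedes it below -/
import Mathlib

section
/- If ζ is a non-standard subtour of a path-t gadget (t ≤ 3) in which no portal has degree two, then there are exactly two indices i ∈ [t] with |d_ζ(X_i) − d_ζ(X̄_i)| = 1. -/
/-!
STATEMENT 1: If ζ is a non-standard subtour of a path-t gadget (t ≤ 3) in which no
portal has degree two, then there are exactly two indices i ∈ [t] with
|d_ζ(Xᵢ) − d_ζ(X̄ᵢ)| = 1.
-/

theorem pathGadget_nonstandard_exactly_two_unbalanced_sides
    {V : Type*} [Fintype V] [DecidableEq V]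
    (ζ : SimpleGraph V) [DecidableRel ζ.Adj]
    {t : ℕ} (ht : t ≤ 3)
    (X Xb : Fin t → V) (Z Zb : V) (internal : Set V)
    -- all the named portals are pairwise distinct
    (hXinj : Function.Injective X) (hXbinj : Function.Injective Xb)
    (hXXb : ∀ i j, X i ≠ Xb j)
    (hZZb : Z ≠ Zb)
    (hZX : ∀ i, Z ≠ X i ∧ Z ≠ Xb i) (hZbX : ∀ i, Zb ≠ X i ∧ Zb ≠ Xb i)
    -- internal vertices are exactly the non-portal vertices
    (hinternal : ∀ v : V, v ∈ internal ↔
      (v ≠ Z ∧ v ≠ Zb ∧ (∀ i, v ≠ X i) ∧ (∀ i, v ≠ Xb i)))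
    -- ζ is a subtour: vertex-disjoint collection of paths
    (hmax : ∀ v : V, ζ.degree v ≤ 2) (hacyc : ζ.IsAcyclic)
    -- PP-portals have degree one, internal vertices degree two
    (hZ : ζ.degree Z = 1) (hZb : ζ.degree Zb = 1)
    (hInt : ∀ v ∈ internal, ζ.degree v = 2)
    -- no portal has degree two: every PV-portal has degree zero or one
    (hPV : ∀ i, ζ.degree (X i) ≤ 1 ∧ ζ.degree (Xb i) ≤ 1)
    -- ζ is non-standard: some side has unequal degrees at its two portals
    (hns : ∃ i, ζ.degree (X i) ≠ ζ.degree (Xb i)) :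
    (Finset.univ.filter (fun i : Fin t =>
      ((ζ.degree (X i) : ℤ) - (ζ.degree (Xb i) : ℤ)).natAbs = 1)).card = 2 := by

  classical
  set A := (Finset.univ.filter (fun i : Fin t =>
      ((ζ.degree (X i) : ℤ) - (ζ.degree (Xb i) : ℤ)).natAbs = 1)) with hA
  have hcond : ∀ i : Fin t,
      (((ζ.degree (X i) : ℤ) - (ζ.degree (Xb i) : ℤ)).natAbs = 1) ↔
      ζ.degree (X i) ≠ ζ.degree (Xb i) := by
    intro i
    have h := hPV i
    omega
  -- the finset of all portals
  set P : Finset V := insert Z (insert Zb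
      (Finset.univ.image X ∪ Finset.univ.image Xb)) with hP
  have hZnot : Z ∉ insert Zb (Finset.univ.image X ∪ Finset.univ.image Xb) := by
    simp only [Finset.mem_insert, Finset.mem_union, Finset.mem_image,
      Finset.mem_univ, true_and]
    push_neg
    exact ⟨hZZb, fun i => fun h => (hZX i).1 h.symm, fun i => fun h => (hZX i).2 h.symm⟩
  have hZbnot : Zb ∉ (Finset.univ.image X ∪ Finset.univ.image Xb) := by
    simp only [Finset.mem_union, Finset.mem_image, Finset.mem_univ, true_and]
    push_neg
    exact ⟨fun i h => (hZbX i).1 h.symm, fun i h => (hZbX i).2 h.symm⟩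
  have hdisj : Disjoint (Finset.univ.image X) (Finset.univ.image Xb) := by
    rw [Finset.disjoint_left]
    intro a ha hb
    simp only [Finset.mem_image, Finset.mem_univ, true_and] at ha hb
    obtain ⟨i, hi⟩ := ha
    obtain ⟨j, hj⟩ := hb
    exact hXXb i j (hi.trans hj.symm)
  have htot : Even (∑ v : V, ζ.degree v) := by
    rw [SimpleGraph.sum_degrees_eq_twice_card_edges]
    exact ⟨_, two_mul _⟩
  have hsplit : ∑ v ∈ P, ζ.degree v + ∑ v ∈ Pᶜ, ζ.degree v = ∑ v : V, ζ.degree v :=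
    Finset.sum_add_sum_compl P _
  have hcompl : Even (∑ v ∈ Pᶜ, ζ.degree v) := by
    apply Finset.even_sum
    intro v hv
    simp only [Finset.mem_compl, hP, Finset.mem_insert, Finset.mem_union,
      Finset.mem_image, Finset.mem_univ, true_and] at hv
    push_neg at hv
    obtain ⟨h1, h2, h3, h4⟩ := hv
    have : v ∈ internal := (hinternal v).2
      ⟨h1, h2, fun i h => h3 i h.symm, fun i h => h4 i h.symm⟩
    rw [hInt v this]
    exact ⟨1, rfl⟩
  have hPsum : ∑ v ∈ P, ζ.degree v =
      2 + (∑ i : Fin t, ζ.degree (X i) + ∑ i : Fin t, ζ.degree (Xb i)) := by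
    rw [hP, Finset.sum_insert hZnot, Finset.sum_insert hZbnot,
      Finset.sum_union hdisj, Finset.sum_image (fun a _ b _ h => hXinj h),
      Finset.sum_image (fun a _ b _ h => hXbinj h), hZ, hZb]
    ring
  have hevenXX : Even (∑ i : Fin t, ζ.degree (X i) + ∑ i : Fin t, ζ.degree (Xb i)) := by
    have h1 : Even (∑ v ∈ P, ζ.degree v) := by
      rcases htot with ⟨a, ha⟩
      rcases hcompl with ⟨b, hb⟩
      exact ⟨a - b, by omega⟩
    rw [hPsum] at h1
    rcases h1 with ⟨c, hc⟩
    exact ⟨c - 1, by omega⟩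
  have hcardsum : A.card = ∑ i : Fin t,
      (if ζ.degree (X i) ≠ ζ.degree (Xb i) then 1 else 0) := by
    rw [hA, Finset.card_filter]
    refine Finset.sum_congr rfl fun i _ => ?_
    simp only [hcond i]
  have hmod : ∀ i : Fin t, (if ζ.degree (X i) ≠ ζ.degree (Xb i) then 1 else 0) % 2
      = (ζ.degree (X i) + ζ.degree (Xb i)) % 2 := by
    intro i
    have h := hPV i
    by_cases hc : ζ.degree (X i) ≠ ζ.degree (Xb i) <;> simp [hc] <;> omega
  have hparity : A.card % 2 = 0 := by
    rw [hcardsum, Finset.sum_nat_mod]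
    rw [Finset.sum_congr rfl fun i _ => hmod i, ← Finset.sum_nat_mod,
      Finset.sum_add_distrib]
    rcases hevenXX with ⟨c, hc⟩
    rw [hc]
    omega
  have hge : 1 ≤ A.card := by
    obtain ⟨i, hi⟩ := hns
    have : i ∈ A := by
      rw [hA, Finset.mem_filter]
      exact ⟨Finset.mem_univ i, (hcond i).2 hi⟩
    exact Finset.card_pos.2 ⟨i, this⟩
  have hle : A.card ≤ 3 := by
    calc A.card ≤ (Finset.univ : Finset (Fin t)).card := Finset.card_le_card (by
      rw [hA]; exact Finset.filter_subset _ _)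
    _ = t := by simp
    _ ≤ 3 := ht
  omega
end

section
/- For two distinct vectors s₁, s₂ ∈ {0,1}^t (t ∈ {1,2,3}), the swap transforming the s₁-subtour of a path-t gadget into its s₂-subtour involves exactly three edges (counting edges removed plus edges added within the gadget) if and only if the Hamming distance of s₁ and s₂ is one; if the Hamming distance is larger, the swap involves more than three edges. -/
/-!
STATEMENT 3: For two distinct vectors s₁, s₂ ∈ {0,1}^t (t ∈ {1,2,3}), the swap
transforming the s₁-subtour of a path-t gadget into its s₂-subtour involves exactly
three edges (edges removed plus edges added within the gadget, i.e. the size of the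
symmetric difference of the edge sets) iff the Hamming distance of s₁ and s₂ is one;
if the Hamming distance is larger, the swap involves more than three edges.
-/

noncomputable def sdeg {V : Type*} (ζ : SimpleGraph V) (v : V) : ℕ :=
  (ζ.neighborSet v).ncard

def IsSubtour {V : Type*} (G ζ : SimpleGraph V) (pp int : Set V) : Prop :=
  ζ ≤ G ∧ ζ.IsAcyclic ∧ (∀ v, sdeg ζ v ≤ 2) ∧
    (∀ v ∈ pp, sdeg ζ v = 1) ∧ (∀ v ∈ int, sdeg ζ v = 2)

/-- Hamming distance of two boolean vectors -/
def hamming {t : ℕ} (s₁ s₂ : Fin t → Bool) : ℕ :=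
  (Finset.univ.filter (fun i => s₁ i ≠ s₂ i)).card

/-- the path-1 gadget of Figure 5(a): Z = 0, S = 1, S' = 2, Z̄ = 3, X₁ = 4, X̄₁ = 5 -/
def pathG1 : SimpleGraph (Fin 6) :=
  SimpleGraph.fromRel (fun a b =>
    (a, b) ∈ ([(0,1), (1,4), (5,2), (2,3), (1,2)] : List (Fin 6 × Fin 6)))

def IsSSubtour1 (ζ : SimpleGraph (Fin 6)) (s : Fin 1 → Bool) : Prop :=
  IsSubtour pathG1 ζ {0, 3} {1, 2} ∧
    sdeg ζ 4 = cond (s 0) 1 0 ∧ sdeg ζ 5 = cond (s 0) 1 0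

/-- the path-2 gadget of Figure 5(b):
Z = 0, Y = 1, Ȳ = 2, Z̄ = 3, X₁ = 4, X̄₁ = 5, X₂ = 6, X̄₂ = 7 -/
def pathG2 : SimpleGraph (Fin 8) :=
  SimpleGraph.fromRel (fun a b =>
    (a, b) ∈ ([(0,1), (1,2), (2,3), (1,4), (2,5), (5,6), (1,6), (2,7)] :
      List (Fin 8 × Fin 8)))

def IsSSubtour2 (ζ : SimpleGraph (Fin 8)) (s : Fin 2 → Bool) : Prop :=
  IsSubtour pathG2 ζ {0, 3} {1, 2} ∧
    sdeg ζ 4 = cond (s 0) 1 0 ∧ sdeg ζ 5 = cond (s 0) 1 0 ∧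
    sdeg ζ 6 = cond (s 1) 1 0 ∧ sdeg ζ 7 = cond (s 1) 1 0

/-- the path-3 gadget of Figure 5(c):
Z = 0, Y = 1, Ȳ = 2, Z̄ = 3, X₁ = 4, X̄₁ = 5, X₂ = 6, X̄₂ = 7, X₃ = 8, X̄₃ = 9 -/
def pathG3 : SimpleGraph (Fin 10) :=
  SimpleGraph.fromRel (fun a b =>
    (a, b) ∈ ([(0,1), (1,2), (2,3), (1,4), (2,5), (5,6), (1,6), (2,7), (7,8), (1,8),
      (2,9), (5,8)] : List (Fin 10 × Fin 10)))

def IsSSubtour3 (ζ : SimpleGraph (Fin 10)) (s : Fin 3 → Bool) : Prop :=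
  IsSubtour pathG3 ζ {0, 3} {1, 2} ∧
    sdeg ζ 4 = cond (s 0) 1 0 ∧ sdeg ζ 5 = cond (s 0) 1 0 ∧
    sdeg ζ 6 = cond (s 1) 1 0 ∧ sdeg ζ 7 = cond (s 1) 1 0 ∧
    sdeg ζ 8 = cond (s 2) 1 0 ∧ sdeg ζ 9 = cond (s 2) 1 0


/-! ### Auxiliary machinery -/

def listGraph {n : ℕ} (E : List (Fin n × Fin n)) : SimpleGraph (Fin n) :=
  SimpleGraph.fromRel (fun a b => (a, b) ∈ E)

instance {n : ℕ} (E : List (Fin n × Fin n)) : DecidableRel (listGraph E).Adj := fun a b => by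
  unfold listGraph SimpleGraph.fromRel
  exact instDecidableAnd

instance : DecidableRel pathG1.Adj := fun a b => by
  unfold pathG1 SimpleGraph.fromRel
  exact instDecidableAnd

instance : DecidableRel pathG2.Adj := fun a b => by
  unfold pathG2 SimpleGraph.fromRel
  exact instDecidableAnd

instance : DecidableRel pathG3.Adj := fun a b => by
  unfold pathG3 SimpleGraph.fromRel
  exact instDecidableAnd

instance symmDiffDec {α : Type*} (A B : Set α) [DecidablePred (· ∈ A)] [DecidablePred (· ∈ B)] :
    DecidablePred (· ∈ symmDiff A B) := fun x =>
  decidable_of_iff ((x ∈ A ∧ x ∉ B) ∨ (x ∈ B ∧ x ∉ A)) (Set.mem_symmDiff).symm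

lemma ncard_eq_filter {α : Type*} [Fintype α] [DecidableEq α] (S : Set α)
    [DecidablePred (· ∈ S)] :
    S.ncard = (Finset.univ.filter (· ∈ S)).card := by
  rw [Set.ncard_eq_toFinset_card']
  congr 1
  ext x
  simp

noncomputable def ind (p : Prop) : ℕ := @ite ℕ p (Classical.propDecidable p) 1 0

lemma ind_le (p : Prop) : ind p ≤ 1 := by unfold ind; split <;> omega
lemma ind_one {p : Prop} (h : ind p = 1) : p := by
  unfold ind at h; by_contra hp; rw [if_neg hp] at h; omega
lemma ind_zero {p : Prop} (h : ind p = 0) : ¬ p := by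
  intro hp; unfold ind at h; rw [if_pos hp] at h; omega

lemma ncard_list {α : Type*} (l : List α) (hnd : l.Nodup) : ∀ (S : Set α),
    (∀ x ∈ S, x ∈ l) → S.ncard = (l.map (fun x => ind (x ∈ S))).sum := by
  induction l with
  | nil => intro S h; simp [Set.eq_empty_iff_forall_notMem.2 (fun x hx => by simpa using h x hx)]
  | cons a t ih =>
    intro S h
    have hfin : S.Finite := Set.Finite.subset (List.finite_toSet (a :: t)) (fun x hx => h x hx)
    have htS : ∀ x ∈ S \ {a}, x ∈ t := by
      intro x hx
      rcases List.mem_cons.1 (h x hx.1) with h' | h'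
      · exact absurd h' hx.2
      · exact h'
    have hrec := ih (List.nodup_cons.1 hnd).2 (S \ {a}) htS
    have hmapeq : (t.map (fun x => ind (x ∈ S \ {a}))).sum
        = (t.map (fun x => ind (x ∈ S))).sum := by
      congr 1
      apply List.map_congr_left
      intro x hx
      have hxa : x ≠ a := fun e => (List.nodup_cons.1 hnd).1 (e ▸ hx)
      congr 1
      simp [Set.mem_diff, hxa]
    by_cases ha : a ∈ S
    · have hcard : S.ncard = (S \ {a}).ncard + 1 := by
        rw [Set.ncard_diff_singleton_add_one ha hfin]
      rw [hcard, hrec, hmapeq]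
      simp [ind, ha]
      omega
    · have heq : S \ {a} = S := by
        ext x; simp only [Set.mem_diff, Set.mem_singleton_iff]
        exact ⟨fun h => h.1, fun h => ⟨h, fun e => ha (e ▸ h)⟩⟩
      rw [heq] at hrec
      simp [List.map_cons, List.sum_cons, ind, ha, hrec]

lemma sdeg_list {n : ℕ} (ζ : SimpleGraph (Fin n)) (v : Fin n) (l : List (Fin n))
    (hnd : l.Nodup) (h : ∀ x, ζ.Adj v x → x ∈ l) :
    sdeg ζ v = (l.map (fun x => ind (ζ.Adj v x))).sum := by
  rw [sdeg, ncard_list l hnd (ζ.neighborSet v) (fun x hx => h x hx)]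
  simp [SimpleGraph.mem_neighborSet]

lemma graph_eq_of_edges {n : ℕ} (ζ T G : SimpleGraph (Fin n))
    (hζ : ∀ a b, ζ.Adj a b → G.Adj a b) (hT : ∀ a b, T.Adj a b → G.Adj a b)
    (E : List (Fin n × Fin n))
    (hE : ∀ a b, G.Adj a b → (a, b) ∈ E ∨ (b, a) ∈ E)
    (h : ∀ p ∈ E, (ζ.Adj p.1 p.2 ↔ T.Adj p.1 p.2)) : ζ = T := by
  ext a b
  constructor
  · intro hab
    rcases hE a b (hζ a b hab) with hm | hm
    · exact (h _ hm).1 hab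
    · exact ((h _ hm).1 hab.symm).symm
  · intro hab
    rcases hE a b (hT a b hab) with hm | hm
    · exact (h _ hm).2 hab
    · exact ((h _ hm).2 hab.symm).symm

/-! ### The unique s-subtours -/

@[reducible] def T1 (b : Bool) : SimpleGraph (Fin 6) :=
  listGraph (if b then [(0,1),(1,4),(5,2),(2,3)] else [(0,1),(2,3),(1,2)])

@[reducible] def T2 (b0 b1 : Bool) : SimpleGraph (Fin 8) :=
  listGraph (match b0, b1 with
    | true, true => [(0,1),(2,3),(1,4),(5,6),(2,7)]
    | true, false => [(0,1),(2,3),(1,4),(2,5)]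
    | false, true => [(0,1),(2,3),(1,6),(2,7)]
    | false, false => [(0,1),(1,2),(2,3)])

@[reducible] def T3 (b0 b1 b2 : Bool) : SimpleGraph (Fin 10) :=
  listGraph (match b0, b1, b2 with
    | true, true, true => [(0,1),(2,3),(1,4),(5,6),(7,8),(2,9)]
    | true, true, false => [(0,1),(2,3),(1,4),(5,6),(2,7)]
    | true, false, true => [(0,1),(2,3),(1,4),(2,9),(5,8)]
    | true, false, false => [(0,1),(2,3),(1,4),(2,5)]
    | false, true, true => [(0,1),(2,3),(1,6),(7,8),(2,9)]
    | false, true, false => [(0,1),(2,3),(1,6),(2,7)]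
    | false, false, true => [(0,1),(2,3),(1,8),(2,9)]
    | false, false, false => [(0,1),(1,2),(2,3)])

lemma uniq1 (ζ : SimpleGraph (Fin 6)) (s : Fin 1 → Bool) (h : IsSSubtour1 ζ s) :
    ζ = T1 (s 0) := by
  obtain ⟨⟨hle, -, -, hpp, hint⟩, h4, h5⟩ := h
  have hle' : ∀ a b, ζ.Adj a b → pathG1.Adj a b := fun a b hab => hle hab
  have H0 := hpp 0 (by simp)
  have H3 := hpp 3 (by simp)
  have H1 := hint 1 (by simp)
  have H2 := hint 2 (by simp)
  rw [sdeg_list ζ 0 [1] (by decide)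
    (fun x hx => (by decide : ∀ x, pathG1.Adj 0 x → x ∈ [(1:Fin 6)]) x (hle' _ _ hx))] at H0
  rw [sdeg_list ζ 3 [2] (by decide)
    (fun x hx => (by decide : ∀ x, pathG1.Adj 3 x → x ∈ [(2:Fin 6)]) x (hle' _ _ hx))] at H3
  rw [sdeg_list ζ 1 [0,4,2] (by decide)
    (fun x hx => (by decide : ∀ x, pathG1.Adj 1 x → x ∈ [(0:Fin 6),4,2]) x (hle' _ _ hx))] at H1
  rw [sdeg_list ζ 2 [5,3,1] (by decide)
    (fun x hx => (by decide : ∀ x, pathG1.Adj 2 x → x ∈ [(5:Fin 6),3,1]) x (hle' _ _ hx))] at H2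
  rw [sdeg_list ζ 4 [1] (by decide)
    (fun x hx => (by decide : ∀ x, pathG1.Adj 4 x → x ∈ [(1:Fin 6)]) x (hle' _ _ hx))] at h4
  rw [sdeg_list ζ 5 [2] (by decide)
    (fun x hx => (by decide : ∀ x, pathG1.Adj 5 x → x ∈ [(2:Fin 6)]) x (hle' _ _ hx))] at h5
  simp only [List.map_cons, List.map_nil, List.sum_cons, List.sum_nil, Nat.add_zero]
    at H0 H1 H2 H3 h4 h5
  rw [ζ.adj_comm 1 0] at H1
  rw [ζ.adj_comm 3 2] at H3
  rw [ζ.adj_comm 2 5, ζ.adj_comm 2 3, ζ.adj_comm 2 1] at H2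
  rw [ζ.adj_comm 4 1] at h4
  have B1 := ind_le (ζ.Adj 0 1)
  have B2 := ind_le (ζ.Adj 1 4)
  have B3 := ind_le (ζ.Adj 5 2)
  have B4 := ind_le (ζ.Adj 2 3)
  have B5 := ind_le (ζ.Adj 1 2)
  cases hs : s 0 <;> rw [hs] at h4 h5 <;>
    simp only [cond_true, cond_false] at h4 h5 <;>
    refine graph_eq_of_edges ζ _ pathG1 hle' (by decide)
      [(0,1),(1,4),(5,2),(2,3),(1,2)] (by decide) ?_ <;>
    intro p hp <;> fin_cases hp <;> dsimp only <;>
    first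
      | exact iff_of_true (ind_one (by omega)) (by decide)
      | exact iff_of_false (ind_zero (by omega)) (by decide)

lemma uniq2 (ζ : SimpleGraph (Fin 8)) (s : Fin 2 → Bool) (h : IsSSubtour2 ζ s) :
    ζ = T2 (s 0) (s 1) := by
  obtain ⟨⟨hle, -, -, hpp, hint⟩, h4, h5, h6, h7⟩ := h
  have hle' : ∀ a b, ζ.Adj a b → pathG2.Adj a b := fun a b hab => hle hab
  have H0 := hpp 0 (by simp)
  have H3 := hpp 3 (by simp)
  have H1 := hint 1 (by simp)
  have H2 := hint 2 (by simp)
  rw [sdeg_list ζ 0 [1] (by decide)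
    (fun x hx => (by decide : ∀ x, pathG2.Adj 0 x → x ∈ [(1:Fin 8)]) x (hle' _ _ hx))] at H0
  rw [sdeg_list ζ 3 [2] (by decide)
    (fun x hx => (by decide : ∀ x, pathG2.Adj 3 x → x ∈ [(2:Fin 8)]) x (hle' _ _ hx))] at H3
  rw [sdeg_list ζ 1 [0,2,4,6] (by decide)
    (fun x hx => (by decide : ∀ x, pathG2.Adj 1 x → x ∈ [(0:Fin 8),2,4,6]) x (hle' _ _ hx))] at H1
  rw [sdeg_list ζ 2 [1,3,5,7] (by decide)
    (fun x hx => (by decide : ∀ x, pathG2.Adj 2 x → x ∈ [(1:Fin 8),3,5,7]) x (hle' _ _ hx))] at H2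
  rw [sdeg_list ζ 4 [1] (by decide)
    (fun x hx => (by decide : ∀ x, pathG2.Adj 4 x → x ∈ [(1:Fin 8)]) x (hle' _ _ hx))] at h4
  rw [sdeg_list ζ 5 [2,6] (by decide)
    (fun x hx => (by decide : ∀ x, pathG2.Adj 5 x → x ∈ [(2:Fin 8),6]) x (hle' _ _ hx))] at h5
  rw [sdeg_list ζ 6 [5,1] (by decide)
    (fun x hx => (by decide : ∀ x, pathG2.Adj 6 x → x ∈ [(5:Fin 8),1]) x (hle' _ _ hx))] at h6
  rw [sdeg_list ζ 7 [2] (by decide)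
    (fun x hx => (by decide : ∀ x, pathG2.Adj 7 x → x ∈ [(2:Fin 8)]) x (hle' _ _ hx))] at h7
  simp only [List.map_cons, List.map_nil, List.sum_cons, List.sum_nil, Nat.add_zero]
    at H0 H1 H2 H3 h4 h5 h6 h7
  rw [ζ.adj_comm 1 0] at H1
  rw [ζ.adj_comm 2 1] at H2
  rw [ζ.adj_comm 3 2] at H3
  rw [ζ.adj_comm 4 1] at h4
  rw [ζ.adj_comm 5 2] at h5
  rw [ζ.adj_comm 6 5, ζ.adj_comm 6 1] at h6
  rw [ζ.adj_comm 7 2] at h7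
  have B1 := ind_le (ζ.Adj 0 1)
  have B2 := ind_le (ζ.Adj 1 2)
  have B3 := ind_le (ζ.Adj 2 3)
  have B4 := ind_le (ζ.Adj 1 4)
  have B5 := ind_le (ζ.Adj 2 5)
  have B6 := ind_le (ζ.Adj 5 6)
  have B7 := ind_le (ζ.Adj 1 6)
  have B8 := ind_le (ζ.Adj 2 7)
  cases hs0 : s 0 <;> cases hs1 : s 1 <;> rw [hs0] at h4 h5 <;> rw [hs1] at h6 h7 <;>
    simp only [cond_true, cond_false] at h4 h5 h6 h7 <;>
    refine graph_eq_of_edges ζ _ pathG2 hle' (by decide)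
      [(0,1),(1,2),(2,3),(1,4),(2,5),(5,6),(1,6),(2,7)] (by decide) ?_ <;>
    intro p hp <;> fin_cases hp <;> dsimp only <;>
    first
      | exact iff_of_true (ind_one (by omega)) (by decide)
      | exact iff_of_false (ind_zero (by omega)) (by decide)

lemma uniq3 (ζ : SimpleGraph (Fin 10)) (s : Fin 3 → Bool) (h : IsSSubtour3 ζ s) :
    ζ = T3 (s 0) (s 1) (s 2) := by
  obtain ⟨⟨hle, -, -, hpp, hint⟩, h4, h5, h6, h7, h8, h9⟩ := h
  have hle' : ∀ a b, ζ.Adj a b → pathG3.Adj a b := fun a b hab => hle hab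
  have H0 := hpp 0 (by simp)
  have H3 := hpp 3 (by simp)
  have H1 := hint 1 (by simp)
  have H2 := hint 2 (by simp)
  rw [sdeg_list ζ 0 [1] (by decide)
    (fun x hx => (by decide : ∀ x, pathG3.Adj 0 x → x ∈ [(1:Fin 10)]) x (hle' _ _ hx))] at H0
  rw [sdeg_list ζ 3 [2] (by decide)
    (fun x hx => (by decide : ∀ x, pathG3.Adj 3 x → x ∈ [(2:Fin 10)]) x (hle' _ _ hx))] at H3
  rw [sdeg_list ζ 1 [0,2,4,6,8] (by decide)
    (fun x hx => (by decide : ∀ x, pathG3.Adj 1 x → x ∈ [(0:Fin 10),2,4,6,8]) x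
      (hle' _ _ hx))] at H1
  rw [sdeg_list ζ 2 [1,3,5,7,9] (by decide)
    (fun x hx => (by decide : ∀ x, pathG3.Adj 2 x → x ∈ [(1:Fin 10),3,5,7,9]) x
      (hle' _ _ hx))] at H2
  rw [sdeg_list ζ 4 [1] (by decide)
    (fun x hx => (by decide : ∀ x, pathG3.Adj 4 x → x ∈ [(1:Fin 10)]) x (hle' _ _ hx))] at h4
  rw [sdeg_list ζ 5 [2,6,8] (by decide)
    (fun x hx => (by decide : ∀ x, pathG3.Adj 5 x → x ∈ [(2:Fin 10),6,8]) x (hle' _ _ hx))] at h5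
  rw [sdeg_list ζ 6 [5,1] (by decide)
    (fun x hx => (by decide : ∀ x, pathG3.Adj 6 x → x ∈ [(5:Fin 10),1]) x (hle' _ _ hx))] at h6
  rw [sdeg_list ζ 7 [2,8] (by decide)
    (fun x hx => (by decide : ∀ x, pathG3.Adj 7 x → x ∈ [(2:Fin 10),8]) x (hle' _ _ hx))] at h7
  rw [sdeg_list ζ 8 [7,1,5] (by decide)
    (fun x hx => (by decide : ∀ x, pathG3.Adj 8 x → x ∈ [(7:Fin 10),1,5]) x (hle' _ _ hx))] at h8
  rw [sdeg_list ζ 9 [2] (by decide)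
    (fun x hx => (by decide : ∀ x, pathG3.Adj 9 x → x ∈ [(2:Fin 10)]) x (hle' _ _ hx))] at h9
  simp only [List.map_cons, List.map_nil, List.sum_cons, List.sum_nil, Nat.add_zero]
    at H0 H1 H2 H3 h4 h5 h6 h7 h8 h9
  rw [ζ.adj_comm 1 0] at H1
  rw [ζ.adj_comm 2 1] at H2
  rw [ζ.adj_comm 3 2] at H3
  rw [ζ.adj_comm 4 1] at h4
  rw [ζ.adj_comm 5 2] at h5
  rw [ζ.adj_comm 6 5, ζ.adj_comm 6 1] at h6
  rw [ζ.adj_comm 7 2] at h7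
  rw [ζ.adj_comm 8 7, ζ.adj_comm 8 1, ζ.adj_comm 8 5] at h8
  rw [ζ.adj_comm 9 2] at h9
  have B1 := ind_le (ζ.Adj 0 1)
  have B2 := ind_le (ζ.Adj 1 2)
  have B3 := ind_le (ζ.Adj 2 3)
  have B4 := ind_le (ζ.Adj 1 4)
  have B5 := ind_le (ζ.Adj 2 5)
  have B6 := ind_le (ζ.Adj 5 6)
  have B7 := ind_le (ζ.Adj 1 6)
  have B8 := ind_le (ζ.Adj 2 7)
  have B9 := ind_le (ζ.Adj 7 8)
  have B10 := ind_le (ζ.Adj 1 8)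
  have B11 := ind_le (ζ.Adj 2 9)
  have B12 := ind_le (ζ.Adj 5 8)
  cases hs0 : s 0 <;> cases hs1 : s 1 <;> cases hs2 : s 2 <;>
    rw [hs0] at h4 h5 <;> rw [hs1] at h6 h7 <;> rw [hs2] at h8 h9 <;>
    simp only [cond_true, cond_false] at h4 h5 h6 h7 h8 h9 <;>
    refine graph_eq_of_edges ζ _ pathG3 hle' (by decide)
      [(0,1),(1,2),(2,3),(1,4),(2,5),(5,6),(1,6),(2,7),(7,8),(1,8),(2,9),(5,8)]
      (by decide) ?_ <;>
    intro p hp <;> fin_cases hp <;> dsimp only <;>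
    first
      | exact iff_of_true (ind_one (by omega)) (by decide)
      | exact iff_of_false (ind_zero (by omega)) (by decide)

theorem pathGadget_swap_involved_edges :
    -- t = 1
    (∀ (s₁ s₂ : Fin 1 → Bool), s₁ ≠ s₂ →
      ∀ (ζ₁ ζ₂ : SimpleGraph (Fin 6)), IsSSubtour1 ζ₁ s₁ → IsSSubtour1 ζ₂ s₂ →
        ((hamming s₁ s₂ = 1 ↔ (symmDiff ζ₁.edgeSet ζ₂.edgeSet).ncard = 3) ∧
         (2 ≤ hamming s₁ s₂ → 3 < (symmDiff ζ₁.edgeSet ζ₂.edgeSet).ncard))) ∧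
    -- t = 2
    (∀ (s₁ s₂ : Fin 2 → Bool), s₁ ≠ s₂ →
      ∀ (ζ₁ ζ₂ : SimpleGraph (Fin 8)), IsSSubtour2 ζ₁ s₁ → IsSSubtour2 ζ₂ s₂ →
        ((hamming s₁ s₂ = 1 ↔ (symmDiff ζ₁.edgeSet ζ₂.edgeSet).ncard = 3) ∧
         (2 ≤ hamming s₁ s₂ → 3 < (symmDiff ζ₁.edgeSet ζ₂.edgeSet).ncard))) ∧
    -- t = 3
    (∀ (s₁ s₂ : Fin 3 → Bool), s₁ ≠ s₂ →
      ∀ (ζ₁ ζ₂ : SimpleGraph (Fin 10)), IsSSubtour3 ζ₁ s₁ → IsSSubtour3 ζ₂ s₂ →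
        ((hamming s₁ s₂ = 1 ↔ (symmDiff ζ₁.edgeSet ζ₂.edgeSet).ncard = 3) ∧
         (2 ≤ hamming s₁ s₂ → 3 < (symmDiff ζ₁.edgeSet ζ₂.edgeSet).ncard))) := by
  refine ⟨?_, ?_, ?_⟩
  · intro s₁ s₂ hne ζ₁ ζ₂ h1 h2
    obtain ⟨a0, rfl⟩ : ∃ a, s₁ = ![a] := ⟨_, funext fun i => by fin_cases i <;> rfl⟩
    obtain ⟨b0, rfl⟩ : ∃ a, s₂ = ![a] := ⟨_, funext fun i => by fin_cases i <;> rfl⟩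
    rw [uniq1 ζ₁ _ h1, uniq1 ζ₂ _ h2, ncard_eq_filter]
    revert hne
    cases a0 <;> cases b0 <;> decide
  · intro s₁ s₂ hne ζ₁ ζ₂ h1 h2
    obtain ⟨a0, a1, rfl⟩ : ∃ a b, s₁ = ![a, b] := ⟨_, _, funext fun i => by fin_cases i <;> rfl⟩
    obtain ⟨b0, b1, rfl⟩ : ∃ a b, s₂ = ![a, b] := ⟨_, _, funext fun i => by fin_cases i <;> rfl⟩
    rw [uniq2 ζ₁ _ h1, uniq2 ζ₂ _ h2, ncard_eq_filter]
    revert hne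
    cases a0 <;> cases a1 <;> cases b0 <;> cases b1 <;> decide
  · intro s₁ s₂ hne ζ₁ ζ₂ h1 h2
    obtain ⟨a0, a1, a2, rfl⟩ : ∃ a b c, s₁ = ![a, b, c] :=
      ⟨_, _, _, funext fun i => by fin_cases i <;> rfl⟩
    obtain ⟨b0, b1, b2, rfl⟩ : ∃ a b c, s₂ = ![a, b, c] :=
      ⟨_, _, _, funext fun i => by fin_cases i <;> rfl⟩
    rw [uniq3 ζ₁ _ h1, uniq3 ζ₂ _ h2, ncard_eq_filter]
    revert hne
    cases a0 <;> cases a1 <;> cases a2 <;> cases b0 <;> cases b1 <;> cases b2 <;> decide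
end

section
/- For every integer q ≥ 3, the XOR gadget of order q has exactly two subtours: the odd subtour, which is a Hamiltonian path between the two portals of the 1-side, and the even subtour, which is a Hamiltonian path between the two portals of the 2-side; moreover the symmetric difference of the two subtours consists of exactly 2q − 2 edges. -/
/-- Vertices of the XOR gadget of order q: (i, 0) = aᵢ, (i, 1) = bᵢ, (i, 2) = the
middle vertex of the 2-path joining aᵢ and bᵢ. -/
abbrev XorV (q : ℕ) := Fin q × Fin 3

/-- adjacency (up to symmetrization): the paths (a₁,…,a_q) and (b₁,…,b_q), and for
each i the 2-path aᵢ–mᵢ–bᵢ -/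
def xorAdj (q : ℕ) : XorV q → XorV q → Prop := fun x y =>
  (x.2.val = 0 ∧ y.2.val = 0 ∧ y.1.val = x.1.val + 1) ∨
  (x.2.val = 1 ∧ y.2.val = 1 ∧ y.1.val = x.1.val + 1) ∨
  (x.2.val = 0 ∧ y.2.val = 2 ∧ x.1 = y.1) ∨
  (x.2.val = 2 ∧ y.2.val = 1 ∧ x.1 = y.1)

/-- the XOR gadget of order q -/
def XorG (q : ℕ) : SimpleGraph (XorV q) := SimpleGraph.fromRel (xorAdj q)

/-- the PV-portals: a₁, b₁, a_q, b_q -/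
def xorPortal (q : ℕ) (v : XorV q) : Prop :=
  (v.1.val = 0 ∨ v.1.val = q - 1) ∧ v.2.val ≠ 2

/-- ζ is a subtour of the XOR gadget: a spanning collection of vertex-disjoint
paths (max degree two, acyclic) in which every non-portal vertex has degree two
(only portals may be endpoints of the paths) -/
def IsXorSubtour (q : ℕ) (ζ : SimpleGraph (XorV q)) : Prop :=
  ζ ≤ XorG q ∧ ζ.IsAcyclic ∧ (∀ v, sdeg ζ v ≤ 2) ∧
    (∀ v, ¬ xorPortal q v → sdeg ζ v = 2)

/-- ζ is a Hamiltonian path of the gadget with endpoints u and w -/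
def IsHamPathBetween (q : ℕ) (ζ : SimpleGraph (XorV q)) (u w : XorV q) : Prop :=
  u ≠ w ∧ sdeg ζ u = 1 ∧ sdeg ζ w = 1 ∧
    (∀ v, v ≠ u → v ≠ w → sdeg ζ v = 2) ∧ ζ.Connected

/-!
A subtour contains every rung, because the middle vertices are not portals and have only two
neighbours in the gadget. At an inner rail vertex the rung then leaves room for exactly one of its
two rail edges, so the rail edges used on each side alternate. Between two consecutive columns the
two rails cannot both be used (with the rungs they would close a 6-cycle), and for `q ≥ 3` they
cannot both be missing between the first two columns. So a subtour contains one of the two zig-zag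
Hamiltonian paths, the path graph on `Fin (3q)` pulled back along a column-by-column ordering of
the vertices; being acyclic, it equals that spanning tree. The two paths share the `2q` rung edges
and split the `2(q - 1)` rail edges between them.
-/

namespace SimpleGraph

section LinearOrder

variable {α : Type*} [LinearOrder α]

theorem Walk.mem_edges_hasse_of_covBy {a b : α} (hab : a ⋖ b) :
    ∀ {u v : α} (w : (hasse α).Walk u v), u ≤ a → b ≤ v → s(a, b) ∈ w.edges
  | _, _, .nil, hu, hv => absurd (hu.trans_lt hab.lt) (not_lt.2 hv)
  | u, _, .cons (v := c) h p, hu, hv => by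
    rw [Walk.edges_cons, List.mem_cons]
    by_cases hc : b ≤ c
    · left
      rcases hasse_adj.1 h with huc | hcu
      · obtain rfl : u = a := le_antisymm hu (not_lt.1 fun hlt => huc.2 hlt (hab.lt.trans_le hc))
        obtain rfl : c = b := le_antisymm (not_lt.1 fun hlt => huc.2 hab.lt hlt) hc
        rfl
      · exact absurd (hcu.lt.trans_le hu) (not_lt.2 (hab.lt.le.trans hc))
    · exact Or.inr (p.mem_edges_hasse_of_covBy hab (hab.le_of_lt (not_le.1 hc)) hv)

theorem isAcyclic_hasse : (hasse α).IsAcyclic := by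
  refine isAcyclic_iff_forall_adj_isBridge.2 fun v w h => isBridge_iff_forall_walk_mem_edges.2 ?_
  intro p
  rcases hasse_adj.1 h with hvw | hwv
  · exact p.mem_edges_hasse_of_covBy hvw le_rfl le_rfl
  · rw [Sym2.eq_swap, ← List.mem_reverse, ← Walk.edges_reverse]
    exact p.reverse.mem_edges_hasse_of_covBy hwv le_rfl le_rfl

end LinearOrder

theorem isTree_pathGraph {n : ℕ} (hn : 0 < n) : (pathGraph n).IsTree := by
  obtain ⟨m, rfl⟩ := Nat.exists_eq_add_one_of_ne_zero hn.ne'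
  exact ⟨pathGraph_connected m, isAcyclic_hasse⟩

theorem ncard_neighborSet_pathGraph {n : ℕ} (k : Fin n) :
    ((pathGraph n).neighborSet k).ncard =
      (if 0 < (k : ℕ) then 1 else 0) + (if (k : ℕ) + 1 < n then 1 else 0) := by
  have hk := k.isLt
  have hnbr (j : Fin n) :
      j ∈ (pathGraph n).neighborSet k ↔ (j : ℕ) + 1 = k ∨ (k : ℕ) + 1 = j := by
    simp only [mem_neighborSet, pathGraph_adj]
    omega
  by_cases h0 : 0 < (k : ℕ) <;> by_cases h1 : (k : ℕ) + 1 < n <;>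
    simp only [h0, h1, if_true, if_false]
  · rw [show (pathGraph n).neighborSet k = {⟨k - 1, by omega⟩, ⟨k + 1, h1⟩} by
      ext j; rw [hnbr]; simp only [Set.mem_insert_iff, Set.mem_singleton_iff, Fin.ext_iff]; omega]
    exact Set.ncard_pair (by simp only [ne_eq, Fin.mk.injEq]; omega)
  · rw [show (pathGraph n).neighborSet k = {⟨k - 1, by omega⟩} by
      ext j; rw [hnbr]; simp only [Set.mem_singleton_iff, Fin.ext_iff]; omega]
    exact Set.ncard_singleton _
  · rw [show (pathGraph n).neighborSet k = {⟨k + 1, h1⟩} by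
      ext j; rw [hnbr]; simp only [Set.mem_singleton_iff, Fin.ext_iff]; omega]
    exact Set.ncard_singleton _
  · rw [show (pathGraph n).neighborSet k = ∅ by
      ext j; rw [hnbr]; simp only [Set.mem_empty_iff_false, iff_false]; omega]
    exact Set.ncard_empty _

theorem Iso.ncard_neighborSet_eq {V W : Type*} {G : SimpleGraph V} {G' : SimpleGraph W}
    (φ : G ≃g G') (v : V) : (G'.neighborSet (φ v)).ncard = (G.neighborSet v).ncard :=
  Set.ncard_congr' (φ.mapNeighborSet v).symm

end SimpleGraph

theorem Set.mem_iff_notMem_of_subset_of_ncard_eq_two {α : Type*} {s : Set α} {a b c : α}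
    (hs : s ⊆ {a, b, c}) (ha : a ∈ s) (hcard : s.ncard = 2) (hab : a ≠ b) (hac : a ≠ c)
    (hbc : b ≠ c) : b ∈ s ↔ c ∉ s := by
  obtain ⟨x, y, hxy, rfl⟩ := Set.ncard_eq_two.1 hcard
  simp only [Set.insert_subset_iff, Set.mem_insert_iff, Set.mem_singleton_iff] at hs ha ⊢
  grind

open SimpleGraph

/-- The gadget consists of the rungs `aᵢ – mᵢ – bᵢ` and the two rails. -/
theorem xorG_adj_iff {q : ℕ} {x y : XorV q} :
    (XorG q).Adj x y ↔
      (x.1 = y.1 ∧ x.2 ≠ y.2 ∧ (x.2.val = 2 ∨ y.2.val = 2)) ∨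
      (x.2 = y.2 ∧ x.2.val ≠ 2 ∧ (x.1.val + 1 = y.1.val ∨ y.1.val + 1 = x.1.val)) := by
  obtain ⟨⟨i, hi⟩, ⟨t, ht⟩⟩ := x
  obtain ⟨⟨j, hj⟩, ⟨u, hu⟩⟩ := y
  rw [XorG, fromRel_adj, xorAdj, xorAdj]
  simp only [ne_eq, Prod.ext_iff, Fin.ext_iff]
  interval_cases t <;> interval_cases u <;> omega

section Subtours

variable {q : ℕ}

/-- The position of `v` on the zig-zag Hamiltonian path that enters each column `i` on side
`(s + i) % 2`, runs through the middle vertex, leaves on the other side and continues along that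
rail to column `i + 1`. -/
def hamIndex (s : ℕ) (v : XorV q) : ℕ :=
  3 * v.1 + if v.2.val = 2 then 1 else if v.2.val = (s + v.1) % 2 then 0 else 2

theorem hamIndex_lt (s : ℕ) (v : XorV q) : hamIndex s v < 3 * q := by
  have := v.1.isLt
  unfold hamIndex
  split_ifs <;> omega

theorem hamIndex_injective (s : ℕ) : Function.Injective (hamIndex (q := q) s) := by
  intro x y h
  have := x.2.isLt
  have := y.2.isLt
  unfold hamIndex at h
  simp only [Prod.ext_iff, Fin.ext_iff]
  split_ifs at h <;> omega

theorem hamIndex_eq_zero {s : ℕ} {v : XorV q} (h₁ : v.1.val = 0) (h₂ : v.2.val = s % 2) :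
    hamIndex s v = 0 := by
  unfold hamIndex
  split_ifs <;> omega

theorem hamIndex_add_one_eq {s : ℕ} {v : XorV q} (h₁ : v.1.val + 1 = q)
    (h₂ : v.2.val = (s + q) % 2) : hamIndex s v + 1 = 3 * q := by
  unfold hamIndex
  split_ifs <;> omega

noncomputable def hamOrder (q s : ℕ) : XorV q ≃ Fin (3 * q) :=
  Equiv.ofBijective (fun v => ⟨hamIndex s v, hamIndex_lt s v⟩) <|
    (Fintype.bijective_iff_injective_and_card _).2
      ⟨fun _ _ h => hamIndex_injective s (Fin.ext_iff.1 h), by simp [mul_comm]⟩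

/-- `s = 0` gives the odd subtour, which starts at `a₁`, and `s = 1` the even one, which starts
at `b₁`. -/
noncomputable def xorSubtour (q s : ℕ) : SimpleGraph (XorV q) :=
  (pathGraph (3 * q)).comap (hamOrder q s)

theorem xorSubtour_adj {s : ℕ} {x y : XorV q} :
    (xorSubtour q s).Adj x y ↔
      hamIndex s x + 1 = hamIndex s y ∨ hamIndex s y + 1 = hamIndex s x :=
  pathGraph_adj

theorem xorSubtour_adj_iff {s : ℕ} {x y : XorV q} :
    (xorSubtour q s).Adj x y ↔
      (x.1 = y.1 ∧ x.2 ≠ y.2 ∧ (x.2.val = 2 ∨ y.2.val = 2)) ∨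
      (x.2 = y.2 ∧ x.2.val ≠ 2 ∧
        ((x.1.val + 1 = y.1.val ∧ x.2.val ≠ (s + x.1) % 2) ∨
         (y.1.val + 1 = x.1.val ∧ y.2.val ≠ (s + y.1) % 2))) := by
  have := x.2.isLt
  have := y.2.isLt
  rw [xorSubtour_adj]
  unfold hamIndex
  simp only [ne_eq, Fin.ext_iff]
  split_ifs <;> omega

theorem isTree_xorSubtour (hq : 0 < q) (s : ℕ) : (xorSubtour q s).IsTree :=
  (Iso.comap (hamOrder q s) _).isTree_iff.2 (isTree_pathGraph (by omega))

theorem sdeg_xorSubtour (s : ℕ) (v : XorV q) :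
    sdeg (xorSubtour q s) v =
      (if 0 < hamIndex s v then 1 else 0) + (if hamIndex s v + 1 < 3 * q then 1 else 0) :=
  ((Iso.comap (hamOrder q s) _).ncard_neighborSet_eq v).symm.trans
    (ncard_neighborSet_pathGraph _)

theorem xorSubtour_le_xorG (s : ℕ) : xorSubtour q s ≤ XorG q := by
  intro x y h
  rw [xorG_adj_iff]
  rcases xorSubtour_adj_iff.1 h with hrung | ⟨hside, hne, ⟨hxy, -⟩ | ⟨hyx, -⟩⟩
  · exact Or.inl hrung
  · exact Or.inr ⟨hside, hne, Or.inl hxy⟩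
  · exact Or.inr ⟨hside, hne, Or.inr hyx⟩

theorem xorPortal_of_hamIndex {s : ℕ} {v : XorV q}
    (hv : hamIndex s v = 0 ∨ hamIndex s v + 1 = 3 * q) : xorPortal q v := by
  have := v.1.isLt
  unfold xorPortal
  rcases hv with hv | hv <;> unfold hamIndex at hv <;> split_ifs at hv <;> omega

theorem isXorSubtour_xorSubtour (s : ℕ) : IsXorSubtour q (xorSubtour q s) := by
  refine ⟨xorSubtour_le_xorG s, ?_, fun v => ?_, fun v hv => ?_⟩
  · rcases Nat.eq_zero_or_pos q with rfl | hq
    · exact fun v => v.1.elim0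
    · exact (isTree_xorSubtour hq s).isAcyclic
  · rw [sdeg_xorSubtour]
    split_ifs <;> omega
  · have := mt (xorPortal_of_hamIndex (s := s)) hv
    have := hamIndex_lt s v
    rw [sdeg_xorSubtour]
    split_ifs <;> omega

theorem xorSubtour_isHamPathBetween (hq : 0 < q) {s : ℕ} {u w : XorV q}
    (hu : hamIndex s u = 0) (hw : hamIndex s w + 1 = 3 * q) :
    IsHamPathBetween q (xorSubtour q s) u w := by
  refine ⟨fun h => by subst h; omega, ?_, ?_, fun v hvu hvw => ?_,
    (isTree_xorSubtour hq s).connected⟩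
  · rw [sdeg_xorSubtour, hu]
    split_ifs <;> omega
  · rw [sdeg_xorSubtour, hw]
    split_ifs <;> omega
  · have hu' := mt (@hamIndex_injective q s v u) hvu
    have hw' := mt (@hamIndex_injective q s v w) hvw
    have := hamIndex_lt s v
    rw [sdeg_xorSubtour]
    split_ifs <;> omega

def railEdge (q : ℕ) (e : Fin (q - 1) × Fin 2) : Sym2 (XorV q) :=
  s((⟨e.1, by omega⟩, ⟨e.2, by omega⟩), (⟨e.1 + 1, by omega⟩, ⟨e.2, by omega⟩))

theorem railEdge_injective : Function.Injective (railEdge q) := by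
  rintro ⟨i, t⟩ ⟨j, u⟩ h
  simp only [railEdge, Sym2.eq_iff, Prod.ext_iff, Fin.ext_iff] at h ⊢
  omega

theorem mk_mem_range_railEdge {x y : XorV q} :
    s(x, y) ∈ Set.range (railEdge q) ↔
      x.2 = y.2 ∧ x.2.val ≠ 2 ∧ (x.1.val + 1 = y.1.val ∨ y.1.val + 1 = x.1.val) := by
  obtain ⟨⟨i, hi⟩, ⟨t, ht⟩⟩ := x
  obtain ⟨⟨j, hj⟩, ⟨u, hu⟩⟩ := y
  simp only [Set.mem_range, railEdge, Sym2.eq_iff, Prod.ext_iff, Fin.ext_iff, Prod.exists,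
    Fin.exists_iff]
  constructor
  · rintro ⟨k, hk, r, hr, h⟩
    omega
  · rintro ⟨rfl, hne, hij | hji⟩
    · exact ⟨i, by omega, t, by omega, by omega⟩
    · exact ⟨j, by omega, t, by omega, by omega⟩

theorem mk_mem_symmDiff_edgeSet_xorSubtour {x y : XorV q} :
    s(x, y) ∈ symmDiff (xorSubtour q 0).edgeSet (xorSubtour q 1).edgeSet ↔
      x.2 = y.2 ∧ x.2.val ≠ 2 ∧ (x.1.val + 1 = y.1.val ∨ y.1.val + 1 = x.1.val) := by
  have := x.2.isLt
  simp only [Set.mem_symmDiff, mem_edgeSet, xorSubtour_adj_iff]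
  omega

theorem ncard_symmDiff_edgeSet_xorSubtour :
    (symmDiff (xorSubtour q 0).edgeSet (xorSubtour q 1).edgeSet).ncard = 2 * q - 2 := by
  have : symmDiff (xorSubtour q 0).edgeSet (xorSubtour q 1).edgeSet = Set.range (railEdge q) := by
    ext e
    induction e using Sym2.ind with
    | _ x y => rw [mk_mem_symmDiff_edgeSet_xorSubtour, mk_mem_range_railEdge]
  rw [this, Set.ncard_range_of_injective railEdge_injective]
  simp only [Nat.card_eq_fintype_card, Fintype.card_prod, Fintype.card_fin]
  omega

end Subtours

namespace IsXorSubtour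

variable {q : ℕ} {ζ : SimpleGraph (XorV q)}

theorem adj_rung (hζ : IsXorSubtour q ζ) (i : Fin q) {t : Fin 3} (ht : t ≠ 2) :
    ζ.Adj (i, 2) (i, t) := by
  have hG : (XorG q).neighborSet (i, 2) = {(i, 0), (i, 1)} := by
    ext ⟨j, u⟩
    have := u.isLt
    simp only [mem_neighborSet, xorG_adj_iff, Set.mem_insert_iff, Set.mem_singleton_iff,
      ne_eq, Prod.ext_iff, Fin.ext_iff, Fin.val_two, Fin.val_zero, Fin.val_one, true_or,
      and_true, not_true_eq_false, false_and, and_false, or_false]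
    omega
  have hsub : ζ.neighborSet (i, 2) ⊆ (XorG q).neighborSet (i, 2) := fun y hy => hζ.1 hy
  have hdeg : sdeg ζ (i, 2) = 2 := hζ.2.2.2 _ (by simp [xorPortal])
  have heq : ζ.neighborSet (i, 2) = (XorG q).neighborSet (i, 2) := by
    refine Set.eq_of_subset_of_ncard_le hsub ?_
    rw [hG, Set.ncard_pair (by simp)]
    exact hdeg.ge
  show (i, t) ∈ ζ.neighborSet (i, 2)
  rw [heq, hG]
  have := t.isLt
  simp only [ne_eq, Set.mem_insert_iff, Set.mem_singleton_iff, Prod.ext_iff, Fin.ext_iff,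
    Fin.val_two, Fin.val_zero, Fin.val_one, true_and] at ht ⊢
  omega

theorem adj_rail_iff_not_adj_rail (hζ : IsXorSubtour q ζ) {i j k : Fin q} {t : Fin 3}
    (ht : t ≠ 2) (hij : i.val + 1 = j.val) (hjk : j.val + 1 = k.val) :
    ζ.Adj (j, t) (i, t) ↔ ¬ ζ.Adj (j, t) (k, t) := by
  have ht' : t.val ≠ 2 := fun h => ht (Fin.ext h)
  have hG : (XorG q).neighborSet (j, t) = {(j, 2), (i, t), (k, t)} := by
    ext ⟨l, u⟩
    have := u.isLt
    simp only [mem_neighborSet, xorG_adj_iff, Set.mem_insert_iff, Set.mem_singleton_iff,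
      ne_eq, Prod.ext_iff, Fin.ext_iff, Fin.val_two]
    omega
  have hsub : ζ.neighborSet (j, t) ⊆ {(j, 2), (i, t), (k, t)} := hG ▸ fun y hy => hζ.1 hy
  have hdeg : sdeg ζ (j, t) = 2 := hζ.2.2.2 _ (by simp only [xorPortal]; omega)
  exact Set.mem_iff_notMem_of_subset_of_ncard_eq_two hsub (hζ.adj_rung j ht).symm hdeg
    (by simp [Prod.ext_iff, Fin.ext_iff]; omega) (by simp [Prod.ext_iff, Fin.ext_iff]; omega)
    (by simp [Prod.ext_iff, Fin.ext_iff]; omega)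

/-- Both rail edges between two consecutive columns would close a 6-cycle with the two rungs. -/
theorem not_adj_rail_and_adj_rail (hζ : IsXorSubtour q ζ) {i j : Fin q}
    (hij : i.val + 1 = j.val) : ¬ (ζ.Adj (i, 0) (j, 0) ∧ ζ.Adj (i, 1) (j, 1)) := by
  rintro ⟨ha, hb⟩
  have hne : i ≠ j := fun h => by rw [h] at hij; omega
  let c : ζ.Walk (i, 0) (i, 0) :=
    .cons ha <| .cons (hζ.adj_rung j (by decide)).symm <| .cons (hζ.adj_rung j (by decide)) <|
      .cons hb.symm <| .cons (hζ.adj_rung i (by decide)).symm <|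
        .cons (hζ.adj_rung i (by decide)) .nil
  refine hζ.2.1 c ?_
  rw [Walk.isCycle_def, Walk.isTrail_def]
  simp [c, Prod.ext_iff, hne, hne.symm]

theorem adj_rail_iff_even (hζ : IsXorSubtour q ζ) {i₀ i₁ : Fin q} (h₀ : i₀.val = 0)
    (h₁ : i₁.val = 1) {t : Fin 3} (ht : t ≠ 2) :
    ∀ {i j : Fin q}, i.val + 1 = j.val →
      (ζ.Adj (i, t) (j, t) ↔ (ζ.Adj (i₀, t) (i₁, t) ↔ Even i.val)) := by
  suffices ∀ n (i j : Fin q), i.val = n → i.val + 1 = j.val →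
      (ζ.Adj (i, t) (j, t) ↔ (ζ.Adj (i₀, t) (i₁, t) ↔ Even n)) from
    fun {i j} hij => this _ i j rfl hij
  intro n
  induction n with
  | zero =>
    intro i j hi hij
    obtain rfl : i = i₀ := Fin.ext (hi.trans h₀.symm)
    obtain rfl : j = i₁ := Fin.ext (by omega)
    simp
  | succ n ih =>
    intro i j hi hij
    have hprev := ih ⟨n, by omega⟩ i rfl (by simp; omega)
    have halt := hζ.adj_rail_iff_not_adj_rail ht (i := ⟨n, by omega⟩) (by simp; omega) hij
    rw [ζ.adj_comm, hprev] at halt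
    rw [Nat.even_add_one]
    tauto

theorem exists_adj_rail_iff (hq : 3 ≤ q) (hζ : IsXorSubtour q ζ) :
    ∃ s < 2, ∀ {i j : Fin q} {t : Fin 3}, t ≠ 2 → i.val + 1 = j.val →
      (ζ.Adj (i, t) (j, t) ↔ t.val ≠ (s + i) % 2) := by
  let i₀ : Fin q := ⟨0, by omega⟩
  let i₁ : Fin q := ⟨1, by omega⟩
  let i₂ : Fin q := ⟨2, by omega⟩
  -- if neither rail is used between the first two columns, both are used between the next two
  have hfirst : ζ.Adj (i₀, 0) (i₁, 0) ↔ ¬ ζ.Adj (i₀, 1) (i₁, 1) := by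
    refine ⟨fun ha hb => hζ.not_adj_rail_and_adj_rail rfl ⟨ha, hb⟩, fun hb => ?_⟩
    by_contra ha
    have ha' := hζ.adj_rail_iff_not_adj_rail (i := i₀) (j := i₁) (k := i₂) (t := 0)
      (by decide) rfl rfl
    have hb' := hζ.adj_rail_iff_not_adj_rail (i := i₀) (j := i₁) (k := i₂) (t := 1)
      (by decide) rfl rfl
    rw [ζ.adj_comm] at ha' hb'
    exact hζ.not_adj_rail_and_adj_rail (i := i₁) (j := i₂) rfl
      ⟨not_not.1 (ha'.not.1 ha), not_not.1 (hb'.not.1 hb)⟩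
  have hparity : ∀ {i j : Fin q} {t : Fin 3}, t ≠ 2 → i.val + 1 = j.val →
      (ζ.Adj (i, t) (j, t) ↔ (ζ.Adj (i₀, t) (i₁, t) ↔ i.val % 2 = 0)) := fun ht hij => by
    rw [hζ.adj_rail_iff_even (i₀ := i₀) (i₁ := i₁) rfl rfl ht hij, Nat.even_iff]
  by_cases ha : ζ.Adj (i₀, 0) (i₁, 0)
  · refine ⟨1, by norm_num, fun {i j t} ht hij => ?_⟩
    obtain rfl | rfl : t = 0 ∨ t = 1 := by omega
    · simp only [hparity ht hij, ha, true_iff]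
      omega
    · simp only [hparity ht hij, hfirst.1 ha, false_iff]
      omega
  · refine ⟨0, by norm_num, fun {i j t} ht hij => ?_⟩
    obtain rfl | rfl : t = 0 ∨ t = 1 := by omega
    · simp only [hparity ht hij, ha, false_iff]
      omega
    · simp only [hparity ht hij, not_not.1 (hfirst.not.1 ha), true_iff]
      omega

theorem eq_xorSubtour (hq : 3 ≤ q) (hζ : IsXorSubtour q ζ) :
    ζ = xorSubtour q 0 ∨ ζ = xorSubtour q 1 := by
  obtain ⟨s, hs, hrail⟩ := hζ.exists_adj_rail_iff hq
  have hle : xorSubtour q s ≤ ζ := by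
    rintro ⟨i, t⟩ ⟨j, u⟩ h
    rcases xorSubtour_adj_iff.1 h with
      ⟨rfl, htu, ht | hu⟩ | ⟨rfl, ht, ⟨hij, hpar⟩ | ⟨hji, hpar⟩⟩
    · obtain rfl : t = 2 := Fin.ext ht
      exact hζ.adj_rung i htu.symm
    · obtain rfl : u = 2 := Fin.ext hu
      exact (hζ.adj_rung i htu).symm
    · exact (hrail (mt (congrArg Fin.val) ht) hij).2 hpar
    · exact ((hrail (mt (congrArg Fin.val) ht) hji).2 hpar).symm
  have : Nonempty (XorV q) := ⟨(⟨0, by omega⟩, 0)⟩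
  have hζs : ζ = xorSubtour q s :=
    ((maximal_isAcyclic_iff_isTree.2 (isTree_xorSubtour (by omega) s)).eq_of_le hζ.2.1 hle).symm
  interval_cases s
  · exact Or.inl hζs
  · exact Or.inr hζs

end IsXorSubtour

theorem xorGadget_two_subtours (q : ℕ) (hq : 3 ≤ q) :
    ∃ ζodd ζeven : SimpleGraph (XorV q),
      ζodd ≠ ζeven ∧ IsXorSubtour q ζodd ∧ IsXorSubtour q ζeven ∧
      (∀ ζ, IsXorSubtour q ζ → ζ = ζodd ∨ ζ = ζeven) ∧
      -- the odd subtour is a Hamiltonian path between the portals of the 1-side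
      IsHamPathBetween q ζodd ((⟨0, by omega⟩ : Fin q), 0)
        (if Even q then ((⟨q - 1, by omega⟩ : Fin q), 0)
         else ((⟨q - 1, by omega⟩ : Fin q), 1)) ∧
      -- the even subtour is a Hamiltonian path between the portals of the 2-side
      IsHamPathBetween q ζeven ((⟨0, by omega⟩ : Fin q), 1)
        (if Even q then ((⟨q - 1, by omega⟩ : Fin q), 1)
         else ((⟨q - 1, by omega⟩ : Fin q), 0)) ∧
      (symmDiff ζodd.edgeSet ζeven.edgeSet).ncard = 2 * q - 2 := by
  have hsymmDiff := ncard_symmDiff_edgeSet_xorSubtour (q := q)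
  refine ⟨xorSubtour q 0, xorSubtour q 1, fun h => ?_, isXorSubtour_xorSubtour 0,
    isXorSubtour_xorSubtour 1, fun ζ hζ => hζ.eq_xorSubtour hq, ?_, ?_, hsymmDiff⟩
  · rw [h, symmDiff_self, Set.bot_eq_empty, Set.ncard_empty] at hsymmDiff
    omega
  all_goals
    split_ifs with hq₂ <;> rw [Nat.even_iff] at hq₂ <;>
      exact xorSubtour_isHamPathBetween (by omega) (hamIndex_eq_zero rfl rfl)
        (hamIndex_add_one_eq (by simp; omega) (by simp; omega))
end

section
/- If τ is the standard tour of G corresponding to a cut γ of H, then the total edge weight of τ plus the value of the cut γ equals zero. -/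
/-!
STATEMENT 9: If τ is the standard tour of G corresponding to a cut γ of H, then the
total edge weight of τ plus the value of the cut γ equals zero.

Setting as in the construction for k ∈ {3,4}: all gadget edge weights are zero except
that in the path gadget of a cover path P = (v₁,…,v_t) the agreeing/disagreeing
weights are chosen so that the weight of the s-subtour of the gadget is
Σᵢ ψᵢ with ψᵢ = 0 if ℓ_P[i]−ℓ_P[i+1] ≡ s[i]−s[i+1] (mod 2) and ψᵢ = −w(vᵢv_{i+1})
otherwise; every H-edge is a consecutive pair of exactly one cover path.
-/

/-- a tour of G: a connected 2-regular spanning subgraph -/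
def IsTour {VG : Type*} (G τ : SimpleGraph VG) : Prop :=
  τ ≤ G ∧ τ.Connected ∧ ∀ v, (τ.neighborSet v).ncard = 2

/-- total weight of a set of edges -/
noncomputable def setW {VG : Type*} [Finite VG] (c : Sym2 VG → ℚ)
    (E : Set (Sym2 VG)) : ℚ :=
  ∑ e ∈ (Set.toFinite E).toFinset, c e

/-- the value of a cut γ : the total weight of the crossing edges -/
noncomputable def cutValue {VH : Type*} [Finite VH] (H : SimpleGraph VH)
    (w : Sym2 VH → ℚ) (γ : VH → Bool) : ℚ :=
  ∑ e ∈ (Set.toFinite {e : Sym2 VH | e ∈ H.edgeSet ∧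
      (∃ a ∈ e, γ a = true) ∧ (∃ b ∈ e, γ b = false)}).toFinset, w e

/-- auxiliary: the H-edge of a consecutive pair of a path -/
def Econs {VH PathIdx : Type*} (plen : PathIdx → ℕ)
    (pvert : (P : PathIdx) → Fin (plen P) → VH)
    (x : (P : PathIdx) × Fin (plen P)) : Sym2 VH :=
  if h : x.2.val + 1 < plen x.1 then s(pvert x.1 x.2, pvert x.1 ⟨x.2.val + 1, h⟩)
  else s(pvert x.1 x.2, pvert x.1 x.2)

open Classical in
lemma setW_union_disjoint {VG : Type*} [Finite VG] (c : Sym2 VG → ℚ)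
    {A B : Set (Sym2 VG)} (h : Disjoint A B) :
    setW c (A ∪ B) = setW c A + setW c B := by
  unfold setW
  rw [show (Set.toFinite (A ∪ B)).toFinset
      = (Set.toFinite A).toFinset ∪ (Set.toFinite B).toFinset by ext e; simp]
  rw [Finset.sum_union (Set.Finite.disjoint_toFinset.mpr h)]

open Classical in
lemma setW_iUnion {VG : Type*} [Finite VG] (c : Sym2 VG → ℚ) {ι : Type*} [Fintype ι]
    (f : ι → Set (Sym2 VG)) (h : Pairwise (Function.onFun Disjoint f)) :
    setW c (⋃ i, f i) = ∑ i, setW c (f i) := by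
  unfold setW
  rw [show (Set.toFinite (⋃ i, f i)).toFinset
      = Finset.univ.biUnion (fun i => (Set.toFinite (f i)).toFinset) by ext e; simp]
  rw [Finset.sum_biUnion]
  intro i _ j _ hij
  simp only [Function.onFun, Set.Finite.disjoint_toFinset]
  exact h hij

lemma cross_wit {VH : Type*} (γ : VH → Bool) (u v : VH) (hne : γ u ≠ γ v) :
    (∃ a ∈ s(u, v), γ a = true) ∧ (∃ b ∈ s(u, v), γ b = false) := by
  cases h1 : γ u <;> cases h2 : γ v
  · exact absurd (h1.trans h2.symm) hne
  · exact ⟨⟨v, by simp, h2⟩, ⟨u, by simp, h1⟩⟩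
  · exact ⟨⟨u, by simp, h1⟩, ⟨v, by simp, h2⟩⟩
  · exact absurd (h1.trans h2.symm) hne

lemma cross_aux {VH : Type*} (γ : VH → Bool) {u v a b : VH}
    (ha : a = u ∨ a = v) (hb : b = u ∨ b = v)
    (hta : γ a = true) (hfb : γ b = false) : γ u ≠ γ v := by
  rcases ha with rfl | rfl <;> rcases hb with rfl | rfl <;> simp_all

lemma bool_aux : ∀ gi gj si sj li lj : Bool,
    (gi = true ↔ si ≠ li) → (gj = true ↔ sj ≠ lj) →
    (((li = lj) ↔ (si = sj)) ↔ gi = gj) := by decide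

theorem standardTour_weight_plus_cutValue_eq_zero
    {VH VG : Type*} [Fintype VH] [Fintype VG]
    (H : SimpleGraph VH) (wH : Sym2 VH → ℚ)
    (G : SimpleGraph VG) (c : Sym2 VG → ℚ)
    (PathIdx : Type*) (plen : PathIdx → ℕ)
    [Fintype PathIdx]
    (hplen : ∀ P, 1 ≤ plen P ∧ plen P ≤ 3)
    (pvert : (P : PathIdx) → Fin (plen P) → VH)
    (label : (P : PathIdx) → Fin (plen P) → Bool)
    (vEdges : VH → Set (Sym2 VG)) (pEdges : PathIdx → Set (Sym2 VG))
    (vStd : VH → Bool → Set (Sym2 VG))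
    (pStd : (P : PathIdx) → (Fin (plen P) → Bool) → Set (Sym2 VG))
    -- disjointness and partition of the gadget edge sets
    (hdisjv : ∀ v w, v ≠ w → Disjoint (vEdges v) (vEdges w))
    (hdisjp : ∀ P Q, P ≠ Q → Disjoint (pEdges P) (pEdges Q))
    (hdisjvp : ∀ v P, Disjoint (vEdges v) (pEdges P))
    (hunion : (⋃ v, vEdges v) ∪ (⋃ P, pEdges P) = G.edgeSet)
    (hsubv : ∀ v b, vStd v b ⊆ vEdges v) (hsubp : ∀ P s, pStd P s ⊆ pEdges P)
    -- vertex gadgets have total weight zero in any standard subtour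
    (hwv : ∀ v b, setW c (vStd v b) = 0)
    -- weight of the s-subtour of the path gadget of P = (v₁,…,v_t):
    -- Σᵢ (0 if (ℓ[i]=ℓ[i+1]) ↔ (s[i]=s[i+1]), else −w(vᵢv_{i+1}))
    (hwp : ∀ P s, setW c (pStd P s) =
      ∑ i : Fin (plen P), (if h : i.val + 1 < plen P then
        (if ((label P i = label P ⟨i.val + 1, h⟩) ↔ (s i = s ⟨i.val + 1, h⟩)) then 0
          else - wH s(pvert P i, pvert P ⟨i.val + 1, h⟩))
        else 0))
    -- every H-edge is a consecutive pair of vertices of exactly one cover path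
    (hedge : ∀ a b : VH, H.Adj a b ↔ ∃ (P : PathIdx) (i : Fin (plen P))
      (h : i.val + 1 < plen P),
        (pvert P i = a ∧ pvert P ⟨i.val + 1, h⟩ = b) ∨
        (pvert P i = b ∧ pvert P ⟨i.val + 1, h⟩ = a))
    (hedgeuniq : ∀ (P : PathIdx) (i : Fin (plen P)) (h : i.val + 1 < plen P)
      (Q : PathIdx) (j : Fin (plen Q)) (h' : j.val + 1 < plen Q),
        s(pvert P i, pvert P ⟨i.val + 1, h⟩) = s(pvert Q j, pvert Q ⟨j.val + 1, h'⟩) →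
        P = Q ∧ i.val = j.val)
    -- τ is the standard tour corresponding to the cut γ
    (τ : SimpleGraph VG) (γ : VH → Bool)
    (hstd : IsTour G τ ∧ (∀ v, ∃ b, τ.edgeSet ∩ vEdges v = vStd v b) ∧
      (∀ P, ∃ s, τ.edgeSet ∩ pEdges P = pStd P s))
    (hcorr_v : ∀ v, τ.edgeSet ∩ vEdges v = vStd v (γ v))
    (hcorr_p : ∀ P s, τ.edgeSet ∩ pEdges P = pStd P s →
      ∀ i, (γ (pvert P i) = true ↔ s i ≠ label P i)) :
    setW c τ.edgeSet + cutValue H wH γ = 0 := by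
  classical
  obtain ⟨htour, _, hp⟩ := hstd
  choose sP hsP using hp
  -- step 1: decompose the weight of the tour
  have hsplit : τ.edgeSet = (⋃ v, τ.edgeSet ∩ vEdges v) ∪ (⋃ P, τ.edgeSet ∩ pEdges P) := by
    ext e
    simp only [Set.mem_union, Set.mem_iUnion, Set.mem_inter_iff]
    constructor
    · intro he
      have hG : e ∈ (⋃ v, vEdges v) ∪ (⋃ P, pEdges P) := by
        rw [hunion]; exact SimpleGraph.edgeSet_mono htour.1 he
      simp only [Set.mem_union, Set.mem_iUnion] at hG
      rcases hG with ⟨v, hv⟩ | ⟨P, hP⟩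
      · exact Or.inl ⟨v, he, hv⟩
      · exact Or.inr ⟨P, he, hP⟩
    · rintro (⟨v, he, _⟩ | ⟨P, he, _⟩) <;> exact he
  have hdisjU : Disjoint (⋃ v, τ.edgeSet ∩ vEdges v) (⋃ P, τ.edgeSet ∩ pEdges P) := by
    rw [Set.disjoint_iUnion_left]
    intro v
    rw [Set.disjoint_iUnion_right]
    intro P
    exact ((hdisjvp v P).mono Set.inter_subset_right Set.inter_subset_right)
  have hW : setW c τ.edgeSet = ∑ P, setW c (pStd P (sP P)) := by
    rw [hsplit, setW_union_disjoint c hdisjU,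
      setW_iUnion c _ (fun v w hvw =>
        (hdisjv v w hvw).mono Set.inter_subset_right Set.inter_subset_right),
      setW_iUnion c _ (fun P Q hPQ =>
        (hdisjp P Q hPQ).mono Set.inter_subset_right Set.inter_subset_right)]
    have h1 : ∀ v, setW c (τ.edgeSet ∩ vEdges v) = 0 := fun v => by
      rw [hcorr_v v]; exact hwv v (γ v)
    have h2 : ∀ P, setW c (τ.edgeSet ∩ pEdges P) = setW c (pStd P (sP P)) := fun P => by
      rw [hsP P]
    rw [Finset.sum_congr rfl (fun v _ => h1 v), Finset.sum_congr rfl (fun P _ => h2 P)]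
    simp
  -- step 2: rewrite each path-gadget weight via the cut
  have hterm : ∀ P, setW c (pStd P (sP P)) =
      ∑ i : Fin (plen P), (if h : i.val + 1 < plen P then
        (if γ (pvert P i) ≠ γ (pvert P ⟨i.val + 1, h⟩)
          then - wH s(pvert P i, pvert P ⟨i.val + 1, h⟩) else 0)
        else 0) := by
    intro P
    rw [hwp P (sP P)]
    refine Finset.sum_congr rfl (fun i _ => ?_)
    by_cases h : i.val + 1 < plen P
    · rw [dif_pos h, dif_pos h]
      have hci := hcorr_p P (sP P) (hsP P) i
      have hcj := hcorr_p P (sP P) (hsP P) ⟨i.val + 1, h⟩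
      have hiff : ((label P i = label P ⟨i.val + 1, h⟩) ↔
          (sP P i = sP P ⟨i.val + 1, h⟩)) ↔
          γ (pvert P i) = γ (pvert P ⟨i.val + 1, h⟩) :=
        bool_aux _ _ _ _ _ _ hci hcj
      by_cases hc : (label P i = label P ⟨i.val + 1, h⟩) ↔ (sP P i = sP P ⟨i.val + 1, h⟩)
      · rw [if_pos hc, if_neg (by simpa using hiff.mp hc)]
      · rw [if_neg hc, if_pos (fun he => hc (hiff.mpr he))]
    · rw [dif_neg h, dif_neg h]
  -- step 3: the cut value as a sum over consecutive pairs
  set t : Finset ((P : PathIdx) × Fin (plen P)) :=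
    Finset.univ.filter (fun x => ∃ h : x.2.val + 1 < plen x.1,
      γ (pvert x.1 x.2) ≠ γ (pvert x.1 ⟨x.2.val + 1, h⟩)) with ht
  have hFsum : ∀ (q : ℚ → ℚ),
      (∑ P, ∑ i : Fin (plen P), (if h : i.val + 1 < plen P then
        (if γ (pvert P i) ≠ γ (pvert P ⟨i.val + 1, h⟩)
          then q (wH s(pvert P i, pvert P ⟨i.val + 1, h⟩)) else 0)
        else 0)) = ∑ x ∈ t, q (wH (Econs plen pvert x)) := by
    intro q
    rw [Finset.sum_sigma' Finset.univ (fun _ => Finset.univ), Finset.univ_sigma_univ, ht,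
      Finset.sum_filter]
    refine Finset.sum_congr rfl (fun x _ => ?_)
    by_cases hc : ∃ h : x.2.val + 1 < plen x.1,
        γ (pvert x.1 x.2) ≠ γ (pvert x.1 ⟨x.2.val + 1, h⟩)
    · obtain ⟨h, hne⟩ := hc
      rw [dif_pos h, if_pos hne, if_pos ⟨h, hne⟩]
      simp only [Econs]
      rw [dif_pos h]
    · rw [if_neg hc]
      by_cases h : x.2.val + 1 < plen x.1
      · rw [dif_pos h, if_neg (fun hne => hc ⟨h, hne⟩)]
      · rw [dif_neg h]
  have hcut : cutValue H wH γ = ∑ x ∈ t, wH (Econs plen pvert x) := by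
    unfold cutValue
    refine (Finset.sum_bij (fun x _ => Econs plen pvert x) ?_ ?_ ?_ ?_).symm
    · -- maps into the crossing edges
      intro x hx
      rw [ht, Finset.mem_filter] at hx
      obtain ⟨-, h, hne⟩ := hx
      rw [Set.Finite.mem_toFinset]
      simp only [Econs]
      rw [dif_pos h]
      exact ⟨(SimpleGraph.mem_edgeSet H).mpr ((hedge _ _).mpr ⟨x.1, x.2, h, Or.inl ⟨rfl, rfl⟩⟩),
        (cross_wit γ _ _ hne).1, (cross_wit γ _ _ hne).2⟩
    · -- injectivity
      rintro ⟨P, i⟩ hx ⟨Q, j⟩ hy hxy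
      rw [ht, Finset.mem_filter] at hx hy
      obtain ⟨-, h, -⟩ := hx
      obtain ⟨-, h', -⟩ := hy
      simp only [Econs] at hxy
      rw [dif_pos h, dif_pos h'] at hxy
      obtain ⟨rfl, hij⟩ := hedgeuniq P i h Q j h' hxy
      exact congrArg (Sigma.mk P) (Fin.ext hij)
    · -- surjectivity
      intro e he
      rw [Set.Finite.mem_toFinset] at he
      revert he
      induction e using Sym2.ind with
      | _ u v =>
        rintro ⟨heH, ⟨a, ha, hta⟩, ⟨b, hb, hfb⟩⟩
        rw [SimpleGraph.mem_edgeSet] at heH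
        obtain ⟨P, i, h, hcase⟩ := (hedge u v).mp heH
        have hγ : γ u ≠ γ v := by
          simp only [Sym2.mem_iff] at ha hb
          exact cross_aux γ ha hb hta hfb
        have hmem : ⟨P, i⟩ ∈ t := by
          rw [ht, Finset.mem_filter]
          refine ⟨Finset.mem_univ _, h, ?_⟩
          rcases hcase with ⟨h1, h2⟩ | ⟨h1, h2⟩ <;> rw [h1, h2]
          · exact hγ
          · exact hγ.symm
        refine ⟨⟨P, i⟩, hmem, ?_⟩
        simp only [Econs]
        rw [dif_pos h]
        rcases hcase with ⟨h1, h2⟩ | ⟨h1, h2⟩ <;> rw [h1, h2]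
        exact Sym2.eq_swap
    · intro x hx; rfl
  -- conclusion
  have h1 := hFsum (fun q => -q)
  rw [hW, Finset.sum_congr rfl (fun P _ => hterm P), h1, hcut,
    ← Finset.sum_add_distrib]
  simp
end
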